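/- arXiv:1905.10332 — 2 statements merged into one kernel-verified Lean document; each statement's English description precedes it below -/
import Mathlib

section
/- Let G = (G⁰, G¹, r, s) be a topological graph with G⁰, G¹ locally compact Hausdorff, r continuous and s a local homeomorphism. For F, H ∈ C_c(G¹), the function v ↦ Σ_{e ∈ s⁻¹(v)} conj(F(e))·H(e) is a well-defined element of C_c(G⁰) (the sum is finite for each v and the resulting function is continuous with compact support). -/
open scoped ComplexConjugate
open Set Function Topology

section Aux

variable {G0 G1 : Type*} [TopologicalSpace G0] [TopologicalSpace G1]

/-- Fibers of a local homeomorphism meet a compact set in a finite set. -/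
lemma aux_fiber_finite [T1Space G0] {s : G1 → G0} (hs : IsLocalHomeomorph s)
    {K : Set G1} (hK : IsCompact K) (v : G0) : ((s ⁻¹' {v}) ∩ K).Finite := by
  have hscont : Continuous s := hs.continuous
  choose chart hmem heq using hs
  have hSc : IsCompact ((s ⁻¹' {v}) ∩ K) :=
    hK.inter_left (isClosed_singleton.preimage hscont)
  have hcover : (s ⁻¹' {v}) ∩ K ⊆ ⋃ x ∈ (s ⁻¹' {v}) ∩ K, (chart x).source := fun x hx =>
    mem_biUnion hx (hmem x)
  obtain ⟨t, htsub, htfin, htcover⟩ :=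
    hSc.elim_finite_subcover_image (fun x _ => (chart x).open_source) hcover
  refine Set.Finite.subset (htfin.biUnion (fun x _ =>
    (?_ : Set.Subsingleton (((s ⁻¹' {v}) ∩ K) ∩ (chart x).source)).finite))
    (fun e he => ?_)
  · rintro a ⟨⟨ha1, _⟩, ha2⟩ b ⟨⟨hb1, _⟩, hb2⟩
    have : (chart x) a = (chart x) b := by
      rw [← heq]; simp only [mem_preimage, mem_singleton_iff] at ha1 hb1; rw [ha1, hb1]
    exact (chart x).injOn ha2 hb2 this
  · obtain ⟨x, hx, hex⟩ := mem_iUnion₂.mp (htcover he)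
    exact mem_biUnion hx ⟨he, hex⟩

/-- Main auxiliary lemma: the fiberwise sum of a compactly supported continuous function
along a local homeomorphism is continuous and compactly supported. -/
lemma aux_main [T2Space G0] [T2Space G1] {s : G1 → G0} (hs : IsLocalHomeomorph s)
    (f : G1 → ℂ) (hf : Continuous f) (hfc : HasCompactSupport f) :
    (∀ v : G0, ((s ⁻¹' {v}) ∩ Function.support f).Finite) ∧
      Continuous (fun v : G0 => ∑ᶠ e ∈ s ⁻¹' {v}, f e) ∧
      HasCompactSupport (fun v : G0 => ∑ᶠ e ∈ s ⁻¹' {v}, f e) := by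
  have hscont : Continuous s := hs.continuous
  have hKc : IsCompact (tsupport f) := hfc
  have hsupK : Function.support f ⊆ tsupport f := subset_tsupport f
  have hfin : ∀ v : G0, ((s ⁻¹' {v}) ∩ Function.support f).Finite := fun v =>
    (aux_fiber_finite hs hKc v).subset (inter_subset_inter_right _ hsupK)
  refine ⟨hfin, ?_, ?_⟩
  · -- Continuity
    rw [continuous_iff_continuousAt]
    intro v0
    classical
    have hsopen : IsOpenMap s := hs.isOpenMap
    -- the finite fiber over v0 inside the support
    have hSfin : ((s ⁻¹' {v0}) ∩ tsupport f).Finite := aux_fiber_finite hs hKc v0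
    choose chart hmem heq using hs
    set S : Set G1 := (s ⁻¹' {v0}) ∩ tsupport f with hS_def
    obtain ⟨W, hW, hWd⟩ := hSfin.t2_separation
    set U : G1 → Set G1 := fun x => (chart x).source ∩ W x with hU_def
    have hUopen : ∀ x, IsOpen (U x) := fun x => (chart x).open_source.inter (hW x).2
    have hUmem : ∀ x, x ∈ U x := fun x => ⟨hmem x, (hW x).1⟩
    have hUdisj : S.PairwiseDisjoint U := hWd.mono_on (fun x _ => inter_subset_right)
    have hUsub : ∀ x, U x ⊆ (chart x).source := fun x => inter_subset_left
    -- the compact set away from the charts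
    set C : Set G1 := tsupport f \ ⋃ x ∈ S, U x with hC_def
    have hCc : IsCompact C := hKc.diff (isOpen_biUnion fun x _ => hUopen x)
    have hsCclosed : IsClosed (s '' C) := (hCc.image hscont).isClosed
    have hv0C : v0 ∉ s '' C := by
      rintro ⟨e, ⟨heK, heU⟩, hev⟩
      exact heU (mem_biUnion (⟨by simpa using hev, heK⟩ : e ∈ S) (hUmem e))
    -- the neighborhood N of v0
    set N : Set G0 := (⋂ x ∈ hSfin.toFinset, s '' U x) \ s '' C with hN_def
    have hNopen : IsOpen N :=
      (isOpen_biInter_finset fun x _ => hsopen (U x) (hUopen x)).sdiff hsCclosed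
    have hv0N : v0 ∈ N := by
      refine ⟨Set.mem_iInter₂.mpr fun x hx => ?_, hv0C⟩
      rw [Set.Finite.mem_toFinset] at hx
      exact ⟨x, hUmem x, by simpa using hx.1⟩
    have hN : N ∈ 𝓝 v0 := hNopen.mem_nhds hv0N
    -- the local formula for the sum
    have hformula : ∀ w ∈ N, (∑ᶠ e ∈ s ⁻¹' {w}, f e) =
        ∑ x ∈ hSfin.toFinset, f ((chart x).symm w) := by
      intro w hw
      obtain ⟨hwInter, hwC⟩ := hw
      -- for each x ∈ S, the local inverse lands in U x with s-value w
      have hsig : ∀ x ∈ hSfin.toFinset, (chart x).symm w ∈ U x ∧ s ((chart x).symm w) = w := by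
        intro x hx
        have hwx : w ∈ s '' U x := Set.mem_iInter₂.mp hwInter x hx
        obtain ⟨u, huU, hus⟩ := hwx
        have husrc : u ∈ (chart x).source := hUsub x huU
        have : (chart x).symm w = u := by
          rw [← hus, heq, (chart x).left_inv husrc]
        rw [this]
        exact ⟨huU, hus⟩
      -- uniqueness of the point of the fiber in U x
      have huniq : ∀ x ∈ hSfin.toFinset, ∀ e ∈ U x, s e = w → e = (chart x).symm w := by
        intro x hx e heU hes
        obtain ⟨hσU, hσs⟩ := hsig x hx
        have h1 : (chart x) e = (chart x) ((chart x).symm w) := by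
          rw [← heq, hes, hσs]
        exact (chart x).injOn (hUsub x heU) (hUsub x hσU) h1
      rw [finsum_mem_eq_sum f (hfin w)]
      -- injectivity of x ↦ (chart x).symm w on S
      have hinj : Set.InjOn (fun x => (chart x).symm w) hSfin.toFinset := by
        intro x hx y hy hxy
        by_contra hne
        have hxS : x ∈ S := hSfin.mem_toFinset.mp hx
        have hyS : y ∈ S := hSfin.mem_toFinset.mp hy
        have hxy' : (chart x).symm w = (chart y).symm w := hxy
        exact (hUdisj hxS hyS hne).le_bot
          ⟨(hsig x hx).1, by rw [hxy']; exact (hsig y hy).1⟩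
      rw [← Finset.sum_image (fun x hx y hy h => hinj hx hy h)]
      refine Finset.sum_subset ?_ ?_
      · -- fiber ∩ support ⊆ image
        intro e he
        rw [Set.Finite.mem_toFinset] at he
        obtain ⟨hes, hesupp⟩ := he
        have hes' : s e = w := by simpa using hes
        have heK : e ∈ tsupport f := hsupK hesupp
        have heC : e ∉ C := fun hC => hwC ⟨e, hC, hes'⟩
        have heU : e ∈ ⋃ x ∈ S, U x := by
          by_contra h; exact heC ⟨heK, h⟩
        obtain ⟨x, hxS, hexU⟩ := mem_iUnion₂.mp heU
        have hx' : x ∈ hSfin.toFinset := hSfin.mem_toFinset.mpr hxS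
        exact Finset.mem_image.mpr ⟨x, hx', (huniq x hx' e hexU hes').symm⟩
      · -- f vanishes on the extra points of the image
        intro e heim hen
        obtain ⟨x, hx, hex⟩ := Finset.mem_image.mp heim
        by_contra hfe
        apply hen
        rw [Set.Finite.mem_toFinset]
        exact ⟨by simp [← hex, (hsig x hx).2], fun h => hfe (h ▸ rfl)⟩
    -- conclude continuity at v0
    have hcf : ContinuousAt (fun w => ∑ x ∈ hSfin.toFinset, f ((chart x).symm w)) v0 := by
      refine tendsto_finset_sum _ (fun x hx => ?_)
      have hxS : x ∈ S := hSfin.mem_toFinset.mp hx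
      have hv0tgt : v0 ∈ (chart x).target := by
        have : (chart x) x ∈ (chart x).target := (chart x).map_source (hmem x)
        rwa [← heq, (show s x = v0 by simpa using hxS.1)] at this
      exact hf.continuousAt.comp ((chart x).continuousAt_symm hv0tgt)
    exact hcf.congr (Filter.eventuallyEq_of_mem hN fun w hw => (hformula w hw).symm)
  · -- Compact support
    refine HasCompactSupport.intro (hKc.image hs.continuous) (fun v hv => ?_)
    refine finsum_mem_eq_zero_of_forall_eq_zero (fun e he => ?_)
    by_contra hfe
    exact hv ⟨e, hsupK hfe, by simpa using he⟩

end Aux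

/-- For a topological graph `(G0, G1, r, s)` with `G0`, `G1` locally compact
Hausdorff, `r` continuous and proper, and `s` a local homeomorphism, and for continuous
compactly supported `F H : G1 → ℂ`, the function
`v ↦ ∑_{e ∈ s⁻¹(v)} conj (F e) * H e` is well defined (each sum has finite support) and is a
continuous compactly supported function on `G0`. -/
theorem stmt_13 {G0 G1 : Type*} [TopologicalSpace G0] [TopologicalSpace G1]
    [LocallyCompactSpace G0] [LocallyCompactSpace G1] [T2Space G0] [T2Space G1]
    (r : G1 → G0) (hr : Continuous r) (hrproper : ∀ K : Set G0, IsCompact K → IsCompact (r ⁻¹' K))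
    (s : G1 → G0) (hs : IsLocalHomeomorph s)
    (F H : G1 → ℂ) (hF : Continuous F) (hFc : HasCompactSupport F)
    (hH : Continuous H) (hHc : HasCompactSupport H) :
    (∀ v : G0, ((s ⁻¹' {v}) ∩ Function.support fun e => conj (F e) * H e).Finite) ∧
      Continuous (fun v : G0 => ∑ᶠ e ∈ s ⁻¹' {v}, conj (F e) * H e) ∧
      HasCompactSupport (fun v : G0 => ∑ᶠ e ∈ s ⁻¹' {v}, conj (F e) * H e) := by
  have hfcont : Continuous (fun e => conj (F e) * H e) :=
    (Complex.continuous_conj.comp hF).mul hH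
  have hfcs : HasCompactSupport (fun e => conj (F e) * H e) := by
    apply HasCompactSupport.intro hFc (fun e he => ?_)
    rw [image_eq_zero_of_notMem_tsupport he]
    simp
  exact aux_main hs _ hfcont hfcs
end

section
/- Let A be a C*-algebra, H a Hilbert space, τ : A → B(H) a unital completely positive map (or contractive positive linear map satisfying the Schwarz inequality τ(a)*τ(a) ≤ τ(a*a)), and suppose a ∈ A satisfies τ(a*a) = τ(a)*τ(a) and τ(aa*) = τ(a)τ(a)*. Then for all b ∈ A, τ(ab) = τ(a)τ(b) and τ(ba) = τ(b)τ(a) (i.e., a lies in the multiplicative domain of τ). -/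
open ContinuousLinearMap Complex
open scoped ComplexStarModule InnerProductSpace


/-- Let `A` be a unital C*-algebra, `H` a Hilbert space and `τ : A → B(H)` a
unital linear map which is positive and satisfies the Schwarz inequality
`τ(x)* τ(x) ≤ τ(x* x)` (e.g. a unital completely positive map).  If `a ∈ A` satisfies
`τ(a* a) = τ(a)* τ(a)` and `τ(a a*) = τ(a) τ(a)*`, then for all `b ∈ A` one has
`τ(ab) = τ(a) τ(b)` and `τ(ba) = τ(b) τ(a)`, i.e. `a` lies in the multiplicative domain
of `τ`. -/
theorem stmt_17 {A : Type*} [CStarAlgebra A] [PartialOrder A] [StarOrderedRing A]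
    {H : Type*} [NormedAddCommGroup H] [InnerProductSpace ℂ H] [CompleteSpace H]
    (τ : A →ₗ[ℂ] (H →L[ℂ] H))
    (hτ_unital : τ 1 = 1)
    (hτ_pos : ∀ x : A, 0 ≤ x → 0 ≤ τ x)
    (hτ_schwarz : ∀ x : A, star (τ x) * τ x ≤ τ (star x * x))
    (a : A)
    (ha₁ : τ (star a * a) = star (τ a) * τ a)
    (ha₂ : τ (a * star a) = τ a * star (τ a)) :
    ∀ b : A, τ (a * b) = τ a * τ b ∧ τ (b * a) = τ b * τ a := by
  -- τ maps positives to self-adjoints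
  have hsa : ∀ x : A, 0 ≤ x → star (τ x) = τ x := fun x hx =>
    (IsSelfAdjoint.of_nonneg (hτ_pos x hx)).star_eq
  -- τ is star-preserving
  have key : ∀ x : A, τ (star x) = star (τ x) := by
    intro x
    have hd := CStarAlgebra.linear_combination_nonneg x
    rw [← hd]
    simp only [star_add, star_sub, star_smul, map_add, map_sub, map_smul, RCLike.star_def]
    rw [hsa _ (CFC.posPart_nonneg (ℜ x : A)), hsa _ (CFC.negPart_nonneg (ℜ x : A)),
      hsa _ (CFC.posPart_nonneg (ℑ x : A)), hsa _ (CFC.negPart_nonneg (ℑ x : A)),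
      (IsSelfAdjoint.of_nonneg (CFC.posPart_nonneg (ℜ x : A))).star_eq,
      (IsSelfAdjoint.of_nonneg (CFC.negPart_nonneg (ℜ x : A))).star_eq,
      (IsSelfAdjoint.of_nonneg (CFC.posPart_nonneg (ℑ x : A))).star_eq,
      (IsSelfAdjoint.of_nonneg (CFC.negPart_nonneg (ℑ x : A))).star_eq]
  -- the "defect" sesquilinear form
  set D : A → A → (H →L[ℂ] H) := fun x y => τ (star x * y) - star (τ x) * τ y with hD
  have hDpos : ∀ x, 0 ≤ D x x := by
    intro x
    rw [ContinuousLinearMap.nonneg_iff_isPositive]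
    exact (ContinuousLinearMap.le_def _ _).mp (hτ_schwarz x)
  have hstarD : ∀ x y, star (D x y) = D y x := by
    intro x y
    have h1 : star (τ (star x * y)) = τ (star y * x) := by
      rw [← key, star_mul, star_star]
    simp only [hD, star_sub, star_mul, star_star, h1]
  have hexp : ∀ (w : ℂ) (x y : A), D (w • x + y) (w • x + y)
      = (starRingEnd ℂ w * w) • D x x + starRingEnd ℂ w • D x y + w • D y x + D y y := by
    intro w x y
    simp only [hD, star_add, star_smul, map_add, map_smul, add_mul, mul_add, smul_mul_assoc,
      mul_smul_comm, smul_smul, RCLike.star_def, smul_sub, smul_add]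
    module
  have main : ∀ c : A, D c c = 0 → ∀ b, D c b = 0 := by
    intro c hc b
    have hz : ∀ ξ : H, ⟪((D c b : H →ₗ[ℂ] H)) ξ, ξ⟫_ℂ = 0 := by
      intro ξ
      by_contra hzne
      set z : ℂ := ⟪(D c b) ξ, ξ⟫_ℂ with hzdef
      have hzne' : z ≠ 0 := hzne
      set K : ℝ := (⟪(D b b) ξ, ξ⟫_ℂ).re with hKdef
      set t : ℝ := (K + 1) / (2 * Complex.normSq z) with htdef
      have hpos := hDpos (((-t : ℂ) * starRingEnd ℂ z) • c + b)
      rw [ContinuousLinearMap.nonneg_iff_isPositive] at hpos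
      have h0 := hpos.2 ξ
      rw [ContinuousLinearMap.reApplyInnerSelf_apply] at h0
      rw [hexp, hc, smul_zero, zero_add] at h0
      have hconj : ⟪(D b c) ξ, ξ⟫_ℂ = starRingEnd ℂ z := by
        rw [← hstarD, ContinuousLinearMap.star_eq_adjoint,
          ContinuousLinearMap.adjoint_inner_left]
        exact (inner_conj_symm ξ _).symm
      simp only [ContinuousLinearMap.add_apply, ContinuousLinearMap.smul_apply,
        inner_add_left, inner_smul_left, hconj, ← hzdef] at h0
      have hn : 0 < Complex.normSq z := Complex.normSq_pos.mpr hzne'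
      have hnorm : (starRingEnd ℂ) ((starRingEnd ℂ) (-↑t * starRingEnd ℂ z)) * z
          + (starRingEnd ℂ) (-↑t * starRingEnd ℂ z) * (starRingEnd ℂ) z
          = ((-2 * t * Complex.normSq z : ℝ) : ℂ) := by
        simp only [starRingEnd_self_apply, map_mul, map_neg, Complex.conj_ofReal]
        rw [mul_assoc, mul_assoc, Complex.mul_conj, ← Complex.normSq_eq_conj_mul_self]
        push_cast
        ring
      rw [hnorm] at h0
      simp only [Complex.add_re, Complex.ofReal_re, RCLike.re_to_complex] at h0
      have ht : -2 * t * Complex.normSq z = -(K + 1) := by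
        rw [htdef]; field_simp
      rw [ht] at h0
      linarith
    have hlin : (D c b : H →ₗ[ℂ] H) = 0 := (inner_map_self_eq_zero _).mp hz
    exact ContinuousLinearMap.coe_injective hlin
  have hDaa : D a a = 0 := by simp only [hD]; rw [ha₁, sub_self]
  have h1 : ∀ b, τ (star a * b) = star (τ a) * τ b := by
    intro b
    have h := main a hDaa b
    simp only [hD, sub_eq_zero] at h
    exact h
  have hDss : D (star a) (star a) = 0 := by
    simp only [hD]
    rw [star_star, key, star_star, ha₂, sub_self]
  have h2 : ∀ b, τ (a * b) = τ a * τ b := by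
    intro b
    have h := main (star a) hDss b
    simp only [hD, star_star, key, sub_eq_zero] at h
    exact h
  intro b
  refine ⟨h2 b, ?_⟩
  have h3 := congrArg star (h1 (star b))
  simp only [← key, star_mul, star_star] at h3
  exact h3
end
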